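/- Let n ≥ m ≥ 1 and let C₁,…,C_m be clauses, each consisting of exactly three literals over variables x₁,…,xₙ. Construct the following non-preemptive instance on 2n machines P₁,…,Pₙ, P̄₁,…,P̄ₙ with time horizon T = 8n: (variable jobs) for each i, one job on P_i and one job on P̄_i, each with window [0, 8n] and processing time 3n; (blocking jobs, each with window of length 1 equal to its processing time 1, hence fixed) for each i, a blocking job at time 3n + 2(i−1) on every machine except P_i, a blocking job at time 3n + 2(i−1) + 1 on every machine except P̄_i, and a blocking job at time 2n + (i−1) on every machine except P_i and P̄_i; (clause jobs) for each clause C_j, a blocking job at time 5n + j on every machine except the at most three machines corresponding to the literals of C_j (machine P_i for the literal x_i and machine P̄_i for the literal ¬x_i). Then there exists a truth assignment to x₁,…,xₙ satisfying all clauses if and only if there exists a feasible non-preemptive schedule such that the set of times t ∈ [0, 8n] at which every machine has some job in process has Lebesgue measure 0. -/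

import Mathlib

open MeasureTheory Set

/-- A machine: `(true, i)` is the path/machine `Pᵢ` (literal `xᵢ`) and `(false, i)` is the
machine `P̄ᵢ` (literal `¬xᵢ`). -/
abbrev Mach (n : ℕ) := Bool × Fin n

/-- The machine corresponding to a literal `(i, b)` (variable `xᵢ`, sign `b`). -/
def litMach {n : ℕ} (l : Fin n × Bool) : Mach n := (l.2, l.1)

/-- The set of times at which machine `μ` is occupied by (fixed) blocking jobs:
for each variable `i` a blocking job at time `3n + 2(i−1)` on every machine except `Pᵢ`,
one at time `3n + 2(i−1) + 1` on every machine except `P̄ᵢ`, one at time `2n + (i−1)` on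
every machine except `Pᵢ` and `P̄ᵢ`, and for each clause `Cⱼ` a blocking job at time `5n + j`
on every machine except those of the literals of `Cⱼ`. (Indices `i, j` below are 0-indexed.) -/
def blocked (n m : ℕ) (C : Fin m → Fin 3 → Fin n × Bool) (μ : Mach n) : Set ℝ :=
  (⋃ i : Fin n, ⋃ (_ : μ ≠ (true, i)),
      Set.Icc ((3 * n : ℕ) + 2 * (i : ℝ)) ((3 * n : ℕ) + 2 * (i : ℝ) + 1)) ∪
  (⋃ i : Fin n, ⋃ (_ : μ ≠ (false, i)),
      Set.Icc ((3 * n : ℕ) + 2 * (i : ℝ) + 1) ((3 * n : ℕ) + 2 * (i : ℝ) + 2)) ∪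
  (⋃ i : Fin n, ⋃ (_ : μ.2 ≠ i),
      Set.Icc ((2 * n : ℕ) + (i : ℝ)) ((2 * n : ℕ) + (i : ℝ) + 1)) ∪
  (⋃ j : Fin m, ⋃ (_ : ∀ l : Fin 3, μ ≠ litMach (C j l)),
      Set.Icc ((5 * n : ℕ) + ((j : ℝ) + 1)) ((5 * n : ℕ) + ((j : ℝ) + 1) + 1))

/-- Machine `μ` is busy at time `t` if its variable job (of processing time `3n`, started at
`sv μ`) or one of its blocking jobs is in process at `t`. -/
def busyAt (n m : ℕ) (C : Fin m → Fin 3 → Fin n × Bool) (sv : Mach n → ℝ)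
    (μ : Mach n) (t : ℝ) : Prop :=
  t ∈ Set.Icc (sv μ) (sv μ + (3 * n : ℕ)) ∨ t ∈ blocked n m C μ

/-! A satisfying assignment gives a schedule in which the machine of every true literal runs its
variable job during `[0, 3n]` and every other machine during `[5n, 8n]`; then on each unit interval
`(k, k + 1)` some machine is idle, so the machines are simultaneously busy only at integer times.

Conversely, since the all-busy set is null, no unit slot `[c, c + 1]` can be covered by the
blocking jobs together with the variable jobs of the machines the slot spares. The slots at
`3n + 2i` and `3n + 2i + 1` force `Pᵢ` to start by `2i` or from `3n + 2i + 1` on, and `P̄ᵢ` by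
`2i + 1` or from `3n + 2i + 2` on; the slot at `2n + i` forces one of them to start from
`2n + i + 1` on. Hence at most one machine of each variable starts by `3n`, and setting `xᵢ` true
iff `Pᵢ` does is consistent. The slot of clause `Cⱼ` forces one of its literal machines to start
by `2n + j + 1 ≤ 3n`, so the assignment satisfies `Cⱼ`. -/

lemma le_of_Ioo_subset_of_volume_eq_zero {s : Set ℝ} (hs : volume s = 0) {a b : ℝ}
    (h : Ioo a b ⊆ s) : b ≤ a := by
  have hnull := measure_mono_null h hs
  rw [Real.volume_Ioo, ENNReal.ofReal_eq_zero] at hnull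
  linarith

lemma eq_of_mem_Ioo_of_mem_Icc {k a : ℕ} {t : ℝ} (hk : t ∈ Ioo (k : ℝ) (k + 1))
    (ha : t ∈ Icc (a : ℝ) (a + 1)) : k = a := by
  have h₁ : a < k + 1 := by exact_mod_cast ha.1.trans_lt hk.2
  have h₂ : k < a + 1 := by exact_mod_cast hk.1.trans_le ha.2
  omega

section Blocked

variable {n m : ℕ} {C : Fin m → Fin 3 → Fin n × Bool} {μ : Mach n}

lemma Icc_subset_blocked_of_ne_true {i : Fin n} (h : μ ≠ (true, i)) :
    Icc ((3 * n : ℕ) + 2 * (i : ℝ)) ((3 * n : ℕ) + 2 * (i : ℝ) + 1) ⊆ blocked n m C μ :=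
  fun _ ht => Or.inl <| Or.inl <| Or.inl <| mem_iUnion₂.2 ⟨i, h, ht⟩

lemma Icc_subset_blocked_of_ne_false {i : Fin n} (h : μ ≠ (false, i)) :
    Icc ((3 * n : ℕ) + 2 * (i : ℝ) + 1) ((3 * n : ℕ) + 2 * (i : ℝ) + 1 + 1) ⊆
      blocked n m C μ := by
  rw [add_assoc _ (1 : ℝ), one_add_one_eq_two]
  exact fun _ ht => Or.inl <| Or.inl <| Or.inr <| mem_iUnion₂.2 ⟨i, h, ht⟩

lemma Icc_subset_blocked_of_snd_ne {i : Fin n} (h : μ.2 ≠ i) :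
    Icc ((2 * n : ℕ) + (i : ℝ)) ((2 * n : ℕ) + (i : ℝ) + 1) ⊆ blocked n m C μ :=
  fun _ ht => Or.inl <| Or.inr <| mem_iUnion₂.2 ⟨i, h, ht⟩

lemma Icc_subset_blocked_of_ne_litMach {j : Fin m} (h : ∀ l, μ ≠ litMach (C j l)) :
    Icc ((5 * n : ℕ) + ((j : ℝ) + 1)) ((5 * n : ℕ) + ((j : ℝ) + 1) + 1) ⊆
      blocked n m C μ :=
  fun _ ht => Or.inr <| mem_iUnion₂.2 ⟨j, h, ht⟩

lemma notMem_blocked {k : ℕ} {t : ℝ} (hk : t ∈ Ioo (k : ℝ) (k + 1))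
    (h₁ : ∀ i : Fin n, k = 3 * n + 2 * i → μ = (true, i))
    (h₂ : ∀ i : Fin n, k = 3 * n + 2 * i + 1 → μ = (false, i))
    (h₃ : ∀ i : Fin n, k = 2 * n + i → μ.2 = i)
    (h₄ : ∀ j : Fin m, k = 5 * n + j + 1 → ∃ l, μ = litMach (C j l)) :
    t ∉ blocked n m C μ := by
  intro ht
  simp only [blocked, mem_union, mem_iUnion, exists_prop] at ht
  rcases ht with ((⟨i, hne, hi⟩ | ⟨i, hne, hi⟩) | ⟨i, hne, hi⟩) | ⟨j, hne, hj⟩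
  · exact hne (h₁ i (eq_of_mem_Ioo_of_mem_Icc hk (by push_cast at hi ⊢; exact hi)))
  · exact hne (h₂ i (eq_of_mem_Ioo_of_mem_Icc hk
      (by push_cast at hi ⊢; ring_nf at hi ⊢; exact hi)))
  · exact hne (h₃ i (eq_of_mem_Ioo_of_mem_Icc hk (by push_cast at hi ⊢; exact hi)))
  · obtain ⟨l, hl⟩ := h₄ j (eq_of_mem_Ioo_of_mem_Icc hk
      (by push_cast at hj ⊢; ring_nf at hj ⊢; exact hj))
    exact hne l hl

end Blocked

def allBusy (n m : ℕ) (C : Fin m → Fin 3 → Fin n × Bool) (sv : Mach n → ℝ) : Set ℝ :=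
  {t ∈ Icc (0 : ℝ) (8 * n : ℕ) | ∀ μ : Mach n, busyAt n m C sv μ t}

section Necessity

variable {n m : ℕ} {C : Fin m → Fin 3 → Fin n × Bool} {sv : Mach n → ℝ}

/-- On a slot `[c, c + 1]` the all-busy set contains `[max c (sv μ), min (c + 1) (sv ν + 3n)]`,
where `μ` and `ν` are the spared machines starting last and first. -/
lemma exists_min_le_max_of_slot (hvol : volume (allBusy n m C sv) = 0) {c : ℝ} (hc₀ : 0 ≤ c)
    (hc₈ : c + 1 ≤ (8 * n : ℕ)) {S : Finset (Mach n)} (hS : S.Nonempty)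
    (hblk : ∀ μ ∉ S, Icc c (c + 1) ⊆ blocked n m C μ) :
    ∃ μ ∈ S, ∃ ν ∈ S, min (c + 1) (sv ν + (3 * n : ℕ)) ≤ max c (sv μ) := by
  obtain ⟨μ, hμS, hμ⟩ := S.exists_max_image sv hS
  obtain ⟨ν, hνS, hν⟩ := S.exists_min_image sv hS
  refine ⟨μ, hμS, ν, hνS,
    le_of_Ioo_subset_of_volume_eq_zero hvol fun t ⟨hat, htb⟩ => ?_⟩
  rw [max_lt_iff] at hat
  rw [lt_min_iff] at htb
  refine ⟨⟨by linarith, by linarith⟩, fun κ => ?_⟩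
  by_cases hκ : κ ∈ S
  · exact Or.inl ⟨by linarith [hμ κ hκ], by linarith [hν κ hκ]⟩
  · exact Or.inr (hblk κ hκ ⟨hat.1.le, htb.1.le⟩)

lemma le_or_le_of_slot (hvol : volume (allBusy n m C sv) = 0) {c : ℝ} (hc₀ : 0 ≤ c)
    (hc₈ : c + 1 ≤ (8 * n : ℕ)) (μ₀ : Mach n)
    (hblk : ∀ μ ≠ μ₀, Icc c (c + 1) ⊆ blocked n m C μ) :
    sv μ₀ + (3 * n : ℕ) ≤ c ∨ c + 1 ≤ sv μ₀ := by
  obtain ⟨μ, hμ, ν, hν, h⟩ := exists_min_le_max_of_slot hvol hc₀ hc₈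
    (Finset.singleton_nonempty μ₀) fun μ hμ => hblk μ (Finset.notMem_singleton.1 hμ)
  rw [Finset.mem_singleton] at hμ hν
  subst μ ν
  have hn : (0 : ℝ) < (3 * n : ℕ) := by have := μ₀.2.pos; positivity
  rw [min_le_iff, le_max_iff, le_max_iff] at h
  rcases h with (h | h) | (h | h)
  · linarith
  · exact Or.inr h
  · exact Or.inl h
  · linarith

lemma start_true_le_or_le (hvol : volume (allBusy n m C sv) = 0) (i : Fin n) :
    sv (true, i) ≤ 2 * i ∨ 3 * n + 2 * i + 1 ≤ sv (true, i) := by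
  have hi : (i : ℝ) + 1 ≤ n := by exact_mod_cast i.isLt
  have := le_or_le_of_slot hvol (c := (3 * n : ℕ) + 2 * (i : ℝ)) (by positivity)
    (by push_cast; linarith) (true, i) fun _ => Icc_subset_blocked_of_ne_true
  push_cast at this
  exact this.imp (fun h => by linarith) id

lemma start_false_le_or_le (hvol : volume (allBusy n m C sv) = 0) (i : Fin n) :
    sv (false, i) ≤ 2 * i + 1 ∨ 3 * n + 2 * i + 2 ≤ sv (false, i) := by
  have hi : (i : ℝ) + 1 ≤ n := by exact_mod_cast i.isLt
  have := le_or_le_of_slot hvol (c := (3 * n : ℕ) + 2 * (i : ℝ) + 1) (by positivity)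
    (by push_cast; linarith) (false, i) fun _ => Icc_subset_blocked_of_ne_false
  push_cast at this
  exact this.imp (fun h => by linarith) (fun h => by linarith)

lemma exists_start_ge_of_slot_var (hvol : volume (allBusy n m C sv) = 0)
    (hsv : ∀ μ, 0 ≤ sv μ) (i : Fin n) : ∃ b, 2 * n + i + 1 ≤ sv (b, i) := by
  have hi : (i : ℝ) + 1 ≤ n := by exact_mod_cast i.isLt
  obtain ⟨μ, hμ, ν, -, h⟩ := exists_min_le_max_of_slot hvol (c := (2 * n : ℕ) + (i : ℝ))
    (by positivity) (by push_cast; linarith) (S := {(true, i), (false, i)}) (by simp)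
    fun μ hμ => Icc_subset_blocked_of_snd_ne fun h => hμ (by
      obtain ⟨b, j⟩ := μ; cases b <;> simp_all)
  have := hsv ν
  rw [min_eq_left (by push_cast; linarith), le_max_iff] at h
  refine ⟨μ.1, ?_⟩
  simp only [Finset.mem_insert, Finset.mem_singleton] at hμ
  rcases hμ with rfl | rfl <;> rcases h with h | h <;> push_cast at h ⊢ <;> linarith

lemma exists_start_le_of_slot_clause (hvol : volume (allBusy n m C sv) = 0)
    (hsv : ∀ μ, sv μ + (3 * n : ℕ) ≤ (8 * n : ℕ)) (hmn : m ≤ n) (j : Fin m) :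
    ∃ l, sv (litMach (C j l)) ≤ 3 * n := by
  have hj : (j : ℝ) + 1 ≤ n := by exact_mod_cast j.isLt.trans_le hmn
  obtain ⟨μ, -, ν, hν, h⟩ := exists_min_le_max_of_slot hvol
    (c := (5 * n : ℕ) + ((j : ℝ) + 1)) (by positivity) (by push_cast; linarith)
    (S := Finset.univ.image fun l => litMach (C j l)) (by simp)
    fun μ hμ => Icc_subset_blocked_of_ne_litMach fun l h => hμ (by simp [h])
  obtain ⟨l, -, rfl⟩ := Finset.mem_image.1 hν
  refine ⟨l, ?_⟩
  have hμ := hsv μ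
  push_cast at hμ h
  rw [le_max_iff, min_le_iff, min_le_iff] at h
  rcases h with (h | h) | (h | h) <;> linarith

lemma not_start_le_and_start_le (hvol : volume (allBusy n m C sv) = 0)
    (hsv : ∀ μ, 0 ≤ sv μ) (i : Fin n) :
    ¬ (sv (true, i) ≤ 3 * n ∧ sv (false, i) ≤ 3 * n) := by
  rintro ⟨htrue, hfalse⟩
  have hi : (i : ℝ) + 1 ≤ n := by exact_mod_cast i.isLt
  obtain ⟨b, hb⟩ := exists_start_ge_of_slot_var hvol hsv i
  cases b
  · rcases start_false_le_or_le hvol i with h | h <;> linarith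
  · rcases start_true_le_or_le hvol i with h | h <;> linarith

lemma exists_satisfying_of_volume_allBusy (hvol : volume (allBusy n m C sv) = 0)
    (hfeas : ∀ μ, 0 ≤ sv μ ∧ sv μ + (3 * n : ℕ) ≤ (8 * n : ℕ)) (hmn : m ≤ n) :
    ∃ A : Fin n → Bool, ∀ j : Fin m, ∃ l : Fin 3, A (C j l).1 = (C j l).2 := by
  refine ⟨fun i => decide (sv (true, i) ≤ 3 * n), fun j => ?_⟩
  obtain ⟨l, hl⟩ := exists_start_le_of_slot_clause hvol (fun μ => (hfeas μ).2) hmn j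
  refine ⟨l, ?_⟩
  generalize C j l = lit at hl ⊢
  obtain ⟨i, _ | _⟩ := lit
  · simpa using fun h => not_start_le_and_start_le hvol (fun μ => (hfeas μ).1) i ⟨h, hl⟩
  · simpa [litMach] using hl

end Necessity

def scheduleOf (n : ℕ) (A : Fin n → Bool) (μ : Mach n) : ℝ :=
  if A μ.2 = μ.1 then 0 else (5 * n : ℕ)

section Sufficiency

variable {n m : ℕ} {C : Fin m → Fin 3 → Fin n × Bool} {A : Fin n → Bool} {μ : Mach n}
  {k : ℕ} {t : ℝ}

lemma scheduleOf_feasible (A : Fin n → Bool) (μ : Mach n) :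
    0 ≤ scheduleOf n A μ ∧ scheduleOf n A μ + (3 * n : ℕ) ≤ (8 * n : ℕ) := by
  unfold scheduleOf
  split_ifs <;> push_cast <;> constructor <;> linarith [(n.cast_nonneg : (0 : ℝ) ≤ n)]

lemma notMem_Icc_scheduleOf_of_eq (hμ : A μ.2 = μ.1) (hk : t ∈ Ioo (k : ℝ) (k + 1))
    (h₃ : 3 * n ≤ k) :
    t ∉ Icc (scheduleOf n A μ) (scheduleOf n A μ + (3 * n : ℕ)) := by
  have : ((3 * n : ℕ) : ℝ) ≤ k := by exact_mod_cast h₃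
  simp only [scheduleOf, hμ, if_true, zero_add, mem_Icc, not_and_or, not_le]
  exact Or.inr (by linarith [hk.1])

lemma notMem_Icc_scheduleOf_of_ne (hμ : A μ.2 ≠ μ.1) (hk : t ∈ Ioo (k : ℝ) (k + 1))
    (h₅ : k < 5 * n) :
    t ∉ Icc (scheduleOf n A μ) (scheduleOf n A μ + (3 * n : ℕ)) := by
  have : (k : ℝ) + 1 ≤ (5 * n : ℕ) := by exact_mod_cast h₅
  simp only [scheduleOf, hμ, if_false, mem_Icc, not_and_or, not_le]
  exact Or.inl (by linarith [hk.2])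

lemma exists_not_busyAt_of_lt (hk : t ∈ Ioo (k : ℝ) (k + 1)) (h₃ : k < 3 * n) :
    ∃ μ, ¬ busyAt n m C (scheduleOf n A) μ t := by
  let i : Fin n := ⟨k - 2 * n, by omega⟩
  refine ⟨(!A i, i), not_or.2 ⟨notMem_Icc_scheduleOf_of_ne (by simp) hk (by omega),
    notMem_blocked hk (fun x hx => by omega) (fun x hx => by omega)
      (fun x hx => Fin.ext (by simp [i]; omega)) (fun x hx => by omega)⟩⟩

lemma notMem_Icc_scheduleOf_of_le_of_lt (hk : t ∈ Ioo (k : ℝ) (k + 1)) (h₃ : 3 * n ≤ k)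
    (h₅ : k < 5 * n) :
    t ∉ Icc (scheduleOf n A μ) (scheduleOf n A μ + (3 * n : ℕ)) := by
  by_cases hμ : A μ.2 = μ.1
  exacts [notMem_Icc_scheduleOf_of_eq hμ hk h₃, notMem_Icc_scheduleOf_of_ne hμ hk h₅]

lemma exists_not_busyAt_of_le_of_lt (hk : t ∈ Ioo (k : ℝ) (k + 1)) (h₃ : 3 * n ≤ k)
    (h₅ : k < 5 * n) : ∃ μ, ¬ busyAt n m C (scheduleOf n A) μ t := by
  obtain ⟨d, hd | hd⟩ := Nat.even_or_odd' (k - 3 * n)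
  · refine ⟨(true, ⟨d, by omega⟩),
      not_or.2 ⟨notMem_Icc_scheduleOf_of_le_of_lt hk h₃ h₅,
        notMem_blocked hk (fun x hx => by simp [Fin.ext_iff]; omega) (fun x hx => by omega)
          (fun x hx => by have := x.isLt; omega) (fun x hx => by omega)⟩⟩
  · refine ⟨(false, ⟨d, by omega⟩),
      not_or.2 ⟨notMem_Icc_scheduleOf_of_le_of_lt hk h₃ h₅,
        notMem_blocked hk (fun x hx => by omega) (fun x hx => by simp [Fin.ext_iff]; omega)
          (fun x hx => by have := x.isLt; omega) (fun x hx => by omega)⟩⟩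

lemma exists_not_busyAt_of_ge (hA : ∀ j : Fin m, ∃ l : Fin 3, A (C j l).1 = (C j l).2)
    (hn : 0 < n) (hk : t ∈ Ioo (k : ℝ) (k + 1)) (h₅ : 5 * n ≤ k) :
    ∃ μ, ¬ busyAt n m C (scheduleOf n A) μ t := by
  by_cases hclause : ∃ j : Fin m, k = 5 * n + j + 1
  · obtain ⟨j, hj⟩ := hclause
    obtain ⟨l, hl⟩ := hA j
    refine ⟨litMach (C j l), not_or.2 ⟨notMem_Icc_scheduleOf_of_eq hl hk (by omega),
      notMem_blocked hk (fun x hx => by have := x.isLt; omega)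
        (fun x hx => by have := x.isLt; omega) (fun x hx => by have := x.isLt; omega)
        fun x hx => ⟨l, by rw [show x = j from Fin.ext (by omega)]⟩⟩⟩
  · let i : Fin n := ⟨0, hn⟩
    refine ⟨(A i, i), not_or.2 ⟨notMem_Icc_scheduleOf_of_eq rfl hk (by omega),
      notMem_blocked hk (fun x hx => by have := x.isLt; omega)
        (fun x hx => by have := x.isLt; omega) (fun x hx => by have := x.isLt; omega)
        fun x hx => (hclause ⟨x, hx⟩).elim⟩⟩

lemma allBusy_scheduleOf_subset_range
    (hA : ∀ j : Fin m, ∃ l : Fin 3, A (C j l).1 = (C j l).2) :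
    allBusy n m C (scheduleOf n A) ⊆ range ((↑) : ℕ → ℝ) := by
  rintro t ⟨⟨ht₀, ht₈⟩, hbusy⟩
  by_contra hnat
  set k := ⌊t⌋₊
  have hk : t ∈ Ioo (k : ℝ) (k + 1) :=
    ⟨(Nat.floor_le ht₀).lt_of_ne fun h => hnat ⟨k, h⟩, Nat.lt_floor_add_one t⟩
  have hk₈ : k < 8 * n := by exact_mod_cast hk.1.trans_le ht₈
  obtain ⟨μ, hμ⟩ : ∃ μ, ¬ busyAt n m C (scheduleOf n A) μ t := by
    rcases lt_or_ge k (3 * n) with h₃ | h₃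
    · exact exists_not_busyAt_of_lt hk h₃
    rcases lt_or_ge k (5 * n) with h₅ | h₅
    · exact exists_not_busyAt_of_le_of_lt hk h₃ h₅
    · exact exists_not_busyAt_of_ge hA (by omega) hk h₅
  exact hμ (hbusy μ)

end Sufficiency

theorem disjoint_paths_3sat_general (n m : ℕ) (hmn : m ≤ n)
    (C : Fin m → Fin 3 → Fin n × Bool) :
    (∃ A : Fin n → Bool, ∀ j : Fin m, ∃ l : Fin 3, A (C j l).1 = (C j l).2) ↔
    (∃ sv : Mach n → ℝ,
      (∀ μ, 0 ≤ sv μ ∧ sv μ + (3 * n : ℕ) ≤ (8 * n : ℕ)) ∧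
      volume {t ∈ Set.Icc (0 : ℝ) (8 * n : ℕ) | ∀ μ : Mach n, busyAt n m C sv μ t} = 0) := by
  constructor
  · rintro ⟨A, hA⟩
    exact ⟨scheduleOf n A, scheduleOf_feasible A, measure_mono_null
      (allBusy_scheduleOf_subset_range hA) ((countable_range _).measure_zero _)⟩
  · rintro ⟨sv, hfeas, hvol⟩
    exact exists_satisfying_of_volume_allBusy hvol hfeas hmn

/-- **Theorem 4 (hardness on disjoint paths, reduction from 3SAT).** For `n ≥ m ≥ 1` and
clauses `C₁, …, C_m`, each a triple of literals over variables `x₁, …, xₙ`: the clauses are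
simultaneously satisfiable if and only if the constructed instance on the `2n` machines
(with time horizon `T = 8n`) admits a feasible non-preemptive schedule — i.e. start times
`sv` of the variable jobs with `0 ≤ sv μ` and `sv μ + 3n ≤ 8n` — such that the set of times
in `[0, 8n]` at which every machine is busy has Lebesgue measure `0`. -/
theorem disjoint_paths_3sat (n m : ℕ) (hm : 1 ≤ m) (hmn : m ≤ n)
    (C : Fin m → Fin 3 → Fin n × Bool) :
    (∃ A : Fin n → Bool, ∀ j : Fin m, ∃ l : Fin 3, A (C j l).1 = (C j l).2) ↔
    (∃ sv : Mach n → ℝ,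
      (∀ μ, 0 ≤ sv μ ∧ sv μ + (3 * n : ℕ) ≤ (8 * n : ℕ)) ∧
      volume {t ∈ Set.Icc (0 : ℝ) (8 * n : ℕ) | ∀ μ : Mach n, busyAt n m C sv μ t} = 0) :=
  disjoint_paths_3sat_general n m hmn C
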